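/- Let Y ∈ ℝ^{m×n}, D ∈ ℝ^{m×p}, λ > 0, and define F(C) = ½‖Y − DC‖_F² + λ‖C‖_{2,1} for C ∈ ℝ^{p×n}. Let C_0, C_1 ∈ ℝ^{p×n}, let τ_0 > 0 and τ_1 ≥ ‖D‖_2², let 0 ≤ δ < 1, and let η = δ·√(τ_0/τ_1) (or η = 0). Set Ĉ = C_1 + η(C_1 − C_0), G = −Dᵀ(Y − DĈ), and let C_2 ∈ ℝ^{p×n} be obtained by applying the soft-thresholding operator Θ_{λ/τ_1} to each column of Ĉ − G/τ_1. Then F(C_1) − F(C_2) ≥ (τ_1/2)‖C_1 − C_2‖_F² − (τ_0 δ²/2)‖C_0 − C_1‖_F². -/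

import Mathlib

/-!
Everything splits over the columns of `C`. Soft thresholding `Θ_u` is the proximal map of
`u‖·‖`, so `x = Θ_u z` satisfies the three-point inequality
`u‖x‖ + ½‖x - z‖² + ½‖w - x‖² ≤ u‖w‖ + ½‖w - z‖²` for every `w`. Taking `z = ĉ - g/τ₁`
and `w = c₁`, and combining it with the exact expansion
`½‖y - Dc‖² = ½‖y - Dĉ‖² + ⟪g, c - ĉ⟫ + ½‖D(c - ĉ)‖²`,
where `0 ≤ ½‖D(c - ĉ)‖² ≤ (τ₁/2)‖c - ĉ‖²`, gives
`F(C₁) - F(C₂) ≥ (τ₁/2)‖C₁ - C₂‖² - (τ₁/2)‖C₁ - Ĉ‖²`.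
Finally `C₁ - Ĉ = η(C₀ - C₁)` and `τ₁η² ≤ τ₀δ²`.
-/

open Matrix Finset

noncomputable def vnorm {p : ℕ} (v : Fin p → ℝ) : ℝ := Real.sqrt (∑ i, v i ^ 2)

noncomputable def frob {a b : ℕ} (A : Matrix (Fin a) (Fin b) ℝ) : ℝ :=
  Real.sqrt (∑ i, ∑ j, A i j ^ 2)

/-- `‖A‖_{2,1}`: the sum of the Euclidean norms of the columns of `A`. -/
noncomputable def norm21 {a b : ℕ} (A : Matrix (Fin a) (Fin b) ℝ) : ℝ :=
  ∑ j, vnorm (fun i => A i j)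

/-- Spectral norm (largest singular value) of a real matrix. -/
noncomputable def specNorm {α β : Type*} [Fintype α] [Fintype β] [DecidableEq β]
    (A : Matrix α β ℝ) : ℝ :=
  ‖LinearMap.toContinuousLinearMap (Matrix.toEuclideanLin A)‖

/-- Soft-thresholding operator on vectors. -/
noncomputable def softThresh {p : ℕ} (u : ℝ) (v : Fin p → ℝ) : Fin p → ℝ :=
  if u < vnorm v then fun i => ((vnorm v - u) / vnorm v) * v i else 0

/-- Column-wise soft thresholding of a matrix. -/
noncomputable def softThreshCols {a b : ℕ} (u : ℝ) (A : Matrix (Fin a) (Fin b) ℝ) :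
    Matrix (Fin a) (Fin b) ℝ :=
  Matrix.of fun r i => softThresh u (fun r' => A r' i) r

open scoped RealInnerProductSpace

section SoftThreshold

variable {E : Type*} [NormedAddCommGroup E] [InnerProductSpace ℝ E]

noncomputable def softThreshold (u : ℝ) (z : E) : E :=
  if u < ‖z‖ then ((‖z‖ - u) / ‖z‖) • z else 0

@[simp]
lemma softThreshold_zero (z : E) : softThreshold 0 z = z := by
  rw [softThreshold]
  split_ifs with h
  · rw [sub_zero, div_self h.ne', one_smul]
  · exact (norm_le_zero_iff.mp (not_lt.mp h)).symm

lemma softThreshold_variational {u : ℝ} (hu : 0 ≤ u) (z w : E) :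
    u * ‖softThreshold u z‖ + ⟪softThreshold u z - w, softThreshold u z - z⟫ ≤ u * ‖w‖ := by
  have hcs : ⟪w, z⟫ ≤ ‖w‖ * ‖z‖ := real_inner_le_norm w z
  rw [softThreshold]
  split_ifs with h
  · have hz : 0 < ‖z‖ := hu.trans_lt h
    obtain ⟨s, hs0, hs1, rfl⟩ : ∃ s, 0 ≤ s ∧ s ≤ 1 ∧ u = s * ‖z‖ :=
      ⟨u / ‖z‖, by positivity, (div_le_one hz).2 h.le, (div_mul_cancel₀ _ hz.ne').symm⟩
    have hx : ((‖z‖ - s * ‖z‖) / ‖z‖) • z = (1 - s) • z := by congr 1; field_simp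
    have hxz : (1 - s) • z - z = -s • z := by
      rw [sub_smul, one_smul, sub_sub_cancel_left, neg_smul]
    rw [hx, hxz, norm_smul, Real.norm_of_nonneg (by linarith), inner_smul_right, inner_sub_left,
      inner_smul_left, real_inner_self_eq_norm_sq, conj_trivial]
    linarith [mul_le_mul_of_nonneg_left hcs hs0]
  · rw [norm_zero, zero_sub, zero_sub, inner_neg_neg]
    linarith [mul_le_mul_of_nonneg_left (not_lt.mp h) (norm_nonneg w)]

lemma softThreshold_three_point {u : ℝ} (hu : 0 ≤ u) (z w : E) :
    u * ‖softThreshold u z‖ + ‖softThreshold u z - z‖ ^ 2 / 2 + ‖w - softThreshold u z‖ ^ 2 / 2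
      ≤ u * ‖w‖ + ‖w - z‖ ^ 2 / 2 := by
  set x := softThreshold u z
  have hsplit : ‖w - z‖ ^ 2 = ‖w - x‖ ^ 2 + 2 * ⟪w - x, x - z⟫ + ‖x - z‖ ^ 2 := by
    rw [← norm_add_sq_real, sub_add_sub_cancel]
  have hvar := softThreshold_variational hu z w
  rw [← neg_sub w x, inner_neg_left] at hvar
  linarith

end SoftThreshold

section ProxGradient

variable {E F : Type*} [NormedAddCommGroup E] [InnerProductSpace ℝ E]
  [NormedAddCommGroup F] [InnerProductSpace ℝ F]

lemma sq_norm_sub_gradient_step (τ : ℝ) (hτ : τ ≠ 0) (c g v : E) :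
    τ / 2 * ‖v - (c - τ⁻¹ • g)‖ ^ 2
      = τ / 2 * ‖v - c‖ ^ 2 + ⟪g, v - c⟫ + ‖g‖ ^ 2 / (2 * τ) := by
  rw [sub_sub_eq_add_sub, add_sub_right_comm, norm_add_sq_real, norm_smul, inner_smul_right,
    real_inner_comm, Real.norm_eq_abs, mul_pow, sq_abs]
  field_simp

noncomputable def proxGradientStep (lam τ : ℝ) (c g : E) : E :=
  softThreshold (lam / τ) (c - τ⁻¹ • g)

lemma proxGradientStep_decrease {f : E → ℝ} {lam τ : ℝ} (hlam : 0 ≤ lam) (hτ : 0 < τ) {c g : E}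
    (h_smooth : ∀ v, f v ≤ f c + ⟪g, v - c⟫ + τ / 2 * ‖v - c‖ ^ 2)
    (h_convex : ∀ v, f c + ⟪g, v - c⟫ ≤ f v) (w : E) :
    τ / 2 * ‖w - proxGradientStep lam τ c g‖ ^ 2 - τ / 2 * ‖w - c‖ ^ 2
      ≤ (f w + lam * ‖w‖)
        - (f (proxGradientStep lam τ c g) + lam * ‖proxGradientStep lam τ c g‖) := by
  unfold proxGradientStep
  set x := softThreshold (lam / τ) (c - τ⁻¹ • g)
  have hprox := softThreshold_three_point (div_nonneg hlam hτ.le) (c - τ⁻¹ • g) w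
  have hscaled := mul_le_mul_of_nonneg_left hprox hτ.le
  rw [mul_add, mul_add, mul_add, ← mul_assoc, ← mul_assoc, mul_div_cancel₀ _ hτ.ne'] at hscaled
  have hx := sq_norm_sub_gradient_step τ hτ.ne' c g x
  have hw := sq_norm_sub_gradient_step τ hτ.ne' c g w
  linarith [h_smooth x, h_convex w]

lemma half_sq_norm_sub_apply_eq (A : E →L[ℝ] F) (y : F) {c g : E}
    (hg : ∀ v, ⟪g, v⟫ = -⟪y - A c, A v⟫) (v : E) :
    ‖y - A v‖ ^ 2 / 2 = ‖y - A c‖ ^ 2 / 2 + ⟪g, v - c⟫ + ‖A (v - c)‖ ^ 2 / 2 := by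
  rw [hg, map_sub, show y - A v = (y - A c) - (A v - A c) by abel, norm_sub_sq_real]
  ring

lemma leastSquares_proxGradientStep_decrease (A : E →L[ℝ] F) (y : F) {lam τ : ℝ}
    (hlam : 0 ≤ lam) (hτ : 0 < τ) (hA : ‖A‖ ^ 2 ≤ τ) {c g : E}
    (hg : ∀ v, ⟪g, v⟫ = -⟪y - A c, A v⟫) (w : E) :
    τ / 2 * ‖w - proxGradientStep lam τ c g‖ ^ 2 - τ / 2 * ‖w - c‖ ^ 2
      ≤ (‖y - A w‖ ^ 2 / 2 + lam * ‖w‖)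
        - (‖y - A (proxGradientStep lam τ c g)‖ ^ 2 / 2 + lam * ‖proxGradientStep lam τ c g‖) := by
  refine proxGradientStep_decrease (f := fun v => ‖y - A v‖ ^ 2 / 2) hlam hτ
    (fun v => ?_) (fun v => ?_) w
  · have hAv : ‖A (v - c)‖ ^ 2 ≤ τ * ‖v - c‖ ^ 2 := by
      calc ‖A (v - c)‖ ^ 2 ≤ (‖A‖ * ‖v - c‖) ^ 2 := by gcongr; exact A.le_opNorm _
        _ ≤ τ * ‖v - c‖ ^ 2 := by rw [mul_pow]; gcongr
    linarith [half_sq_norm_sub_apply_eq A y hg v]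
  · linarith [half_sq_norm_sub_apply_eq A y hg v, sq_nonneg ‖A (v - c)‖]

end ProxGradient

section Columns

open WithLp

def euclidCol {m n : Type*} (A : Matrix m n ℝ) (j : n) : EuclideanSpace ℝ m := toLp 2 (Aᵀ j)

variable {m n k : Type*}

@[simp] lemma euclidCol_sub (A B : Matrix m n ℝ) (j : n) :
    euclidCol (A - B) j = euclidCol A j - euclidCol B j := rfl

@[simp] lemma euclidCol_smul (s : ℝ) (A : Matrix m n ℝ) (j : n) :
    euclidCol (s • A) j = s • euclidCol A j := rfl

@[simp] lemma euclidCol_neg (A : Matrix m n ℝ) (j : n) :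
    euclidCol (-A) j = -euclidCol A j := rfl

lemma euclidCol_mul [Fintype k] [DecidableEq k] (D : Matrix m k ℝ) (C : Matrix k n ℝ) (j : n) :
    euclidCol (D * C) j = toEuclideanLin D (euclidCol C j) := by
  ext i
  simp [euclidCol, mul_apply, mulVec, dotProduct, mul_comm]

lemma inner_toEuclideanLin_transpose [Fintype m] [DecidableEq m] [Fintype k] [DecidableEq k]
    (D : Matrix m k ℝ) (r : EuclideanSpace ℝ m) (v : EuclideanSpace ℝ k) :
    ⟪toEuclideanLin Dᵀ r, v⟫ = ⟪r, toEuclideanLin D v⟫ := by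
  rw [← conjTranspose_eq_transpose_of_trivial, toEuclideanLin_conjTranspose_eq_adjoint,
    LinearMap.adjoint_inner_left]

lemma vnorm_eq_norm_toLp {p : ℕ} (v : Fin p → ℝ) :
    vnorm v = ‖(toLp 2 v : EuclideanSpace ℝ (Fin p))‖ := by
  simp [vnorm, EuclideanSpace.norm_eq]

lemma frob_sq_eq_sum {a b : ℕ} (A : Matrix (Fin a) (Fin b) ℝ) :
    frob A ^ 2 = ∑ j, ‖euclidCol A j‖ ^ 2 := by
  rw [frob, Real.sq_sqrt (by positivity), Finset.sum_comm]
  simp [euclidCol, EuclideanSpace.norm_sq_eq]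

lemma norm21_eq_sum {a b : ℕ} (A : Matrix (Fin a) (Fin b) ℝ) :
    norm21 A = ∑ j, ‖euclidCol A j‖ := by
  simp only [norm21, vnorm_eq_norm_toLp]
  rfl

lemma toLp_softThresh {p : ℕ} (u : ℝ) (v : Fin p → ℝ) :
    (toLp 2 (softThresh u v) : EuclideanSpace ℝ (Fin p)) = softThreshold u (toLp 2 v) := by
  rw [softThresh, softThreshold, ← vnorm_eq_norm_toLp]
  split_ifs <;> rfl

lemma euclidCol_softThreshCols {a b : ℕ} (u : ℝ) (A : Matrix (Fin a) (Fin b) ℝ) (j : Fin b) :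
    euclidCol (softThreshCols u A) j = softThreshold u (euclidCol A j) :=
  toLp_softThresh u (Aᵀ j)

lemma softThresh_zero {p : ℕ} (v : Fin p → ℝ) : softThresh 0 v = v :=
  WithLp.toLp_injective 2 (by rw [toLp_softThresh, softThreshold_zero])

lemma softThreshCols_zero {a b : ℕ} (A : Matrix (Fin a) (Fin b) ℝ) :
    softThreshCols 0 A = A := by
  ext r i
  simp [softThreshCols, softThresh_zero]

end Columns

section GroupLasso

variable {m n p : ℕ}

noncomputable def groupLasso (Y : Matrix (Fin m) (Fin n) ℝ) (D : Matrix (Fin m) (Fin p) ℝ)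
    (lam : ℝ) (C : Matrix (Fin p) (Fin n) ℝ) : ℝ :=
  frob (Y - D * C) ^ 2 / 2 + lam * norm21 C

lemma groupLasso_eq_sum (Y : Matrix (Fin m) (Fin n) ℝ) (D : Matrix (Fin m) (Fin p) ℝ) (lam : ℝ)
    (C : Matrix (Fin p) (Fin n) ℝ) :
    groupLasso Y D lam C
      = ∑ j, (‖euclidCol Y j - toEuclideanLin D (euclidCol C j)‖ ^ 2 / 2
          + lam * ‖euclidCol C j‖) := by
  simp only [groupLasso, frob_sq_eq_sum, norm21_eq_sum, sum_div, mul_sum, ← sum_add_distrib,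
    euclidCol_sub, euclidCol_mul]

lemma frob_smul_sq {a b : ℕ} (s : ℝ) (A : Matrix (Fin a) (Fin b) ℝ) :
    frob (s • A) ^ 2 = s ^ 2 * frob A ^ 2 := by
  simp only [frob_sq_eq_sum, mul_sum, euclidCol_smul, norm_smul, mul_pow, Real.norm_eq_abs,
    sq_abs]

lemma groupLasso_proxGradient_decrease (Y : Matrix (Fin m) (Fin n) ℝ)
    (D : Matrix (Fin m) (Fin p) ℝ) {lam τ : ℝ} (hlam : 0 ≤ lam) (hτ : 0 < τ)
    (hD : specNorm D ^ 2 ≤ τ) (Chat W : Matrix (Fin p) (Fin n) ℝ) :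
    τ / 2 * frob (W - softThreshCols (lam / τ) (Chat - τ⁻¹ • -(Dᵀ * (Y - D * Chat)))) ^ 2
        - τ / 2 * frob (W - Chat) ^ 2
      ≤ groupLasso Y D lam W
        - groupLasso Y D lam (softThreshCols (lam / τ) (Chat - τ⁻¹ • -(Dᵀ * (Y - D * Chat)))) := by
  rw [groupLasso_eq_sum, groupLasso_eq_sum, frob_sq_eq_sum, frob_sq_eq_sum, mul_sum, mul_sum,
    ← sum_sub_distrib, ← sum_sub_distrib]
  refine sum_le_sum fun j _ => ?_
  simp only [euclidCol_sub, euclidCol_softThreshCols, euclidCol_smul, euclidCol_neg, euclidCol_mul]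
  refine leastSquares_proxGradientStep_decrease (toEuclideanLin D).toContinuousLinearMap _ hlam hτ
    hD (fun v => ?_) _
  rw [inner_neg_left, inner_toEuclideanLin_transpose]
  rfl

end GroupLasso

theorem prox_gradient_extrapolated_decrease_general
    (m n p : ℕ)
    (Y : Matrix (Fin m) (Fin n) ℝ) (D : Matrix (Fin m) (Fin p) ℝ)
    (lam : ℝ) (hlam : 0 < lam)
    (C0 C1 : Matrix (Fin p) (Fin n) ℝ)
    (τ0 τ1 δ η : ℝ)
    (hτ0 : 0 < τ0) (hτ1 : specNorm D ^ 2 ≤ τ1)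
    (hη : η = δ * Real.sqrt (τ0 / τ1) ∨ η = 0)
    (Chat : Matrix (Fin p) (Fin n) ℝ) (hChat : Chat = C1 + η • (C1 - C0))
    (G : Matrix (Fin p) (Fin n) ℝ) (hG : G = -(Dᵀ * (Y - D * Chat)))
    (C2 : Matrix (Fin p) (Fin n) ℝ)
    (hC2 : C2 = softThreshCols (lam / τ1) (Chat - τ1⁻¹ • G))
    (F : Matrix (Fin p) (Fin n) ℝ → ℝ)
    (hF : ∀ C, F C = frob (Y - D * C) ^ 2 / 2 + lam * norm21 C) :
    F C1 - F C2 ≥ τ1 / 2 * frob (C1 - C2) ^ 2 - τ0 * δ ^ 2 / 2 * frob (C0 - C1) ^ 2 := by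
  obtain rfl : F = groupLasso Y D lam := funext hF
  subst hC2 hG
  have hC1_sub_Chat : C1 - Chat = η • (C0 - C1) := by
    rw [hChat, ← neg_sub C0 C1, smul_neg]; abel
  obtain hτ1z | hτ1pos := ((sq_nonneg _).trans hτ1).eq_or_lt
  · -- `τ0 / 0 = 0` forces `η = 0`, and then the step is `C2 = C1`
    obtain rfl : η = 0 := by simpa [← hτ1z] using hη
    rw [show Chat = C1 by simpa using hChat]
    simp only [← hτ1z, div_zero, _root_.inv_zero, zero_smul, sub_zero, softThreshCols_zero,
      sub_self, zero_div, zero_mul, zero_sub, ge_iff_le, neg_nonpos]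
    positivity
  · have hη2 : τ1 * η ^ 2 ≤ τ0 * δ ^ 2 := by
      rcases hη with rfl | rfl
      · rw [mul_pow, Real.sq_sqrt (div_nonneg hτ0.le hτ1pos.le)]
        exact le_of_eq (by field_simp)
      · nlinarith
    have hdec := groupLasso_proxGradient_decrease Y D hlam.le hτ1pos hτ1 Chat C1
    rw [hC1_sub_Chat, frob_smul_sq] at hdec
    linarith [mul_le_mul_of_nonneg_right hη2 (sq_nonneg (frob (C0 - C1)))]

/-- Sufficient decrease of one extrapolated proximal-gradient step on
`F(C) = ½‖Y − DC‖_F² + λ‖C‖_{2,1}`: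
`F(C₁) − F(C₂) ≥ (τ₁/2)‖C₁ − C₂‖_F² − (τ₀δ²/2)‖C₀ − C₁‖_F²`. -/
theorem prox_gradient_extrapolated_decrease
    (m n p : ℕ)
    (Y : Matrix (Fin m) (Fin n) ℝ) (D : Matrix (Fin m) (Fin p) ℝ)
    (lam : ℝ) (hlam : 0 < lam)
    (C0 C1 : Matrix (Fin p) (Fin n) ℝ)
    (τ0 τ1 δ η : ℝ)
    (hτ0 : 0 < τ0) (hτ1 : specNorm D ^ 2 ≤ τ1)
    (hδ0 : 0 ≤ δ) (hδ1 : δ < 1)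
    (hη : η = δ * Real.sqrt (τ0 / τ1) ∨ η = 0)
    (Chat : Matrix (Fin p) (Fin n) ℝ) (hChat : Chat = C1 + η • (C1 - C0))
    (G : Matrix (Fin p) (Fin n) ℝ) (hG : G = -(Dᵀ * (Y - D * Chat)))
    (C2 : Matrix (Fin p) (Fin n) ℝ)
    (hC2 : C2 = softThreshCols (lam / τ1) (Chat - τ1⁻¹ • G))
    (F : Matrix (Fin p) (Fin n) ℝ → ℝ)
    (hF : ∀ C, F C = frob (Y - D * C) ^ 2 / 2 + lam * norm21 C) :
    F C1 - F C2 ≥ τ1 / 2 * frob (C1 - C2) ^ 2 - τ0 * δ ^ 2 / 2 * frob (C0 - C1) ^ 2 :=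
  prox_gradient_extrapolated_decrease_general m n p Y D lam hlam C0 C1 τ0 τ1 δ η hτ0 hτ1 hη Chat
    hChat G hG C2 hC2 F hF
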